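/- arXiv:1202.4560 — 2 statements merged into one kernel-verified Lean document; each statement's English description precedes it below -/
import Mathlib

section
/- Let r, s be real numbers such that nr + ms ∉ ℤ for every pair of integers (n,m) ≠ (0,0), and let T(x,y) = (x+r, y+s). Then there is no exchange of three pieces R conjugate to T with p_R(2) ≤ 4. Combined with the fact that p^T(1) ≥ 3 and the strict monotonicity of the complexity, this gives p^T(2) ≥ 5 for the complexity function associated to T. -/
/-
The transitions `i → j` carrying positive mass for the invariant measure give distinct words of
length two, so there are at most four of them. If no letter has two successors, the coding is
determined by its first letter on a set of positive measure, which conjugacy forbids. Otherwise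
the transition masses form a flow on at most three letters, and a case analysis shows that either
some letter returns to itself with all of its mass (again impossible for a conjugate exchange),
or at most two letters carry mass, or the three letter masses satisfy an integer relation besides
summing to `1`. Since `R` preserves the measure and `R x - x = (r, s) - vec i` on the `i`-th
piece, the mean displacement vanishes: `(r, s)` is the barycenter of the vectors `vec i` with the
letter masses as weights. In the last two cases the weights range over a one-parameter family, so
`(r, s)` lies on a rational line, contradicting total irrationality.
-/

open MeasureTheory Filter Topology

noncomputable section

/-- The inclusion of `ℤ × ℤ` into `ℝ × ℝ`. -/
def latVec (v : ℤ × ℤ) : ℝ × ℝ := ((v.1 : ℝ), (v.2 : ℝ))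

/-- An exchange of `m` pieces of the plane adapted to a measurable map `T` of the plane:
measurable pieces `D i`, pairwise almost disjoint, whose union has Lebesgue measure 1 and is
almost surely a fundamental domain for `ℤ²`, together with integer vectors `vec i` and the
exchange map `R` acting on the union of the pieces by `R x = T x - vec i` for `x ∈ D i`,
preserving Lebesgue measure.  `C` is the coding map: `C x k` records the piece containing
`R^[k] x`. -/
structure PieceExchange (T : ℝ × ℝ → ℝ × ℝ) (m : ℕ) where
  D : Fin m → Set (ℝ × ℝ)
  vec : Fin m → ℤ × ℤ
  R : ℝ × ℝ → ℝ × ℝ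
  C : ℝ × ℝ → ℕ → Fin m
  measD : ∀ i, MeasurableSet (D i)
  aeDisjoint : ∀ i j, i ≠ j → volume (D i ∩ D j) = 0
  measure_union : volume (⋃ i, D i) = 1
  fundamental :
    volume {x | x ∈ ⋃ i, D i ∧ ∃ y ∈ ⋃ i, D i, y ≠ x ∧ ∃ a b : ℤ, x - y = ((a : ℝ), (b : ℝ))} = 0
  measR : Measurable R
  measC : Measurable C
  mem_code : ∀ x ∈ ⋃ i, D i, ∀ k : ℕ, R^[k] x ∈ D (C x k)
  R_eq : ∀ x ∈ ⋃ i, D i, ∀ k : ℕ, R (R^[k] x) = T (R^[k] x) - latVec (vec (C x k))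
  meas_pres : ∀ A : Set (ℝ × ℝ), MeasurableSet A →
    volume ((⋃ i, D i) ∩ R ⁻¹' A) = volume ((⋃ i, D i) ∩ A)

namespace PieceExchange

variable {T : ℝ × ℝ → ℝ × ℝ} {m : ℕ}

/-- The domain of the exchange: the union of the pieces. -/
def domain (E : PieceExchange T m) : Set (ℝ × ℝ) := ⋃ i, E.D i

/-- The exchange is conjugate to `T` when the coding map is injective off a Lebesgue-null set. -/
def Conjugate (E : PieceExchange T m) : Prop :=
  volume {x | x ∈ E.domain ∧ ∃ y ∈ E.domain, y ≠ x ∧ E.C y = E.C x} = 0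

/-- The language of the exchange: all finite factors of coding sequences. -/
def lang (E : PieceExchange T m) : Set (List (Fin m)) :=
  {w | ∃ n k : ℕ, ∃ x ∈ E.domain, w = (List.range n).map fun j => E.C x (k + j)}

/-- The complexity of the exchange: the number of words of length `n` in its language. -/
def complexity (E : PieceExchange T m) (n : ℕ) : ℕ :=
  Nat.card {w : List (Fin m) // w ∈ E.lang ∧ w.length = n}

end PieceExchange

/-- The complexity function associated to `T`: the infimum of the complexities of the
exchanges of pieces conjugate to `T` (`⊤` if there is no such exchange). -/
def complexityFn (T : ℝ × ℝ → ℝ × ℝ) (n : ℕ) : ℕ∞ :=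
  ⨅ (m : ℕ) (E : PieceExchange T m) (_ : E.Conjugate), (E.complexity n : ℕ∞)

open Finset

theorem Fintype.sum_eq_add_add {ι M : Type*} [Fintype ι] [AddCommMonoid M] {f : ι → M}
    {a b c : ι} (hab : a ≠ b) (hac : a ≠ c) (hbc : b ≠ c)
    (h : ∀ i, i ≠ a → i ≠ b → i ≠ c → f i = 0) : ∑ i, f i = f a + f b + f c := by
  classical
  rw [← Finset.sum_subset (subset_univ {a, b, c}) fun i _ hi => h i (by simp_all) (by simp_all)
    (by simp_all), sum_insert (by simp [hab, hac]), sum_pair hbc, add_assoc]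

namespace MeasureTheory.MeasurePreserving

variable {α : Type*} [MeasurableSpace α] {μ : Measure α} [IsFiniteMeasure μ] {f : α → α}

theorem integral_comp_sub_eq_zero (hf : MeasurePreserving f μ μ) {g : α → ℝ} (hg : Measurable g)
    {B : ℝ} (hB : ∀ᵐ x ∂μ, |g (f x) - g x| ≤ B) : ∫ x, (g (f x) - g x) ∂μ = 0 := by
  -- `g` itself need not be integrable: truncate it at height `n` and let `n → ∞`.
  set G : ℕ → α → ℝ := fun n x => max (min (g x) n) (-n)
  have hG_meas (n : ℕ) : Measurable (G n) := (hg.min measurable_const).max measurable_const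
  have hG_int (n : ℕ) : Integrable (G n) μ := by
    refine .of_bound (hG_meas n).aestronglyMeasurable n (ae_of_all _ fun x => ?_)
    rw [Real.norm_eq_abs, abs_le]
    exact ⟨le_max_right _ _, max_le (min_le_right _ _) (by linarith [n.cast_nonneg (α := ℝ)])⟩
  have hG_lip (n : ℕ) (x y : α) : |G n x - G n y| ≤ |g x - g y| :=
    (abs_max_sub_max_le_abs _ _ _).trans ((abs_min_sub_min_le_max _ _ _ _).trans (by simp))
  have hG_eq {n : ℕ} {x : α} (hn : |g x| ≤ n) : G n x = g x := by
    rw [abs_le] at hn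
    simp only [G, min_eq_left hn.2, max_eq_left hn.1]
  have h_zero (n : ℕ) : ∫ x, (G n (f x) - G n x) ∂μ = 0 := by
    have h_comp : Integrable (fun x => G n (f x)) μ :=
      (hf.integrable_comp (hG_int n).1).2 (hG_int n)
    rw [integral_sub h_comp (hG_int n), ← integral_map hf.measurable.aemeasurable
      (hG_meas n).aestronglyMeasurable, hf.map_eq, sub_self]
  have h_lim := tendsto_integral_of_dominated_convergence (F := fun n x => G n (f x) - G n x)
    (f := fun x => g (f x) - g x) (fun _ => B)
    (fun n => ((hG_meas n).comp hf.measurable |>.sub (hG_meas n)).aestronglyMeasurable)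
    (integrable_const B) (fun n => hB.mono fun x hx => (hG_lip n _ _).trans hx)
    (ae_of_all _ fun x => tendsto_atTop_of_eventually_const (i₀ := ⌈max |g (f x)| |g x|⌉₊)
      fun n hn => by
        have hn' := (Nat.le_ceil _).trans (Nat.cast_le.2 hn)
        rw [hG_eq ((le_max_left _ _).trans hn'), hG_eq ((le_max_right _ _).trans hn')])
  simp only [h_zero] at h_lim
  exact tendsto_nhds_unique h_lim tendsto_const_nhds

end MeasureTheory.MeasurePreserving

def TotallyIrrational (r s : ℝ) : Prop :=
  ∀ p q : ℤ, (p, q) ≠ (0, 0) → ∀ k : ℤ, (p : ℝ) * r + (q : ℝ) * s ≠ (k : ℝ)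

namespace TotallyIrrational

variable {r s : ℝ}

theorem smul_ne_add_smul (h : TotallyIrrational r s) {d : ℤ} (hd : d ≠ 0) (N w : ℤ × ℤ) (θ : ℝ) :
    (d : ℝ) • (r, s) ≠ latVec N + θ • latVec w := by
  intro heq
  have h₁ : (d : ℝ) * r = N.1 + θ * w.1 := by simpa [latVec] using congrArg Prod.fst heq
  have h₂ : (d : ℝ) * s = N.2 + θ * w.2 := by simpa [latVec] using congrArg Prod.snd heq
  by_cases hw : w = 0
  · refine h d 0 (by simp [hd]) N.1 ?_
    simpa [hw] using h₁
  · refine h (d * w.2) (-(d * w.1)) ?_ (N.1 * w.2 - N.2 * w.1) ?_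
    · contrapose! hw
      simp_all [Prod.ext_iff]
    · push_cast
      linear_combination (w.2 : ℝ) * h₁ - (w.1 : ℝ) * h₂

/-- Besides `∑ wᵢ = 1`, a second integer relation leaves a one-parameter family of weights,
whose barycenters lie on a rational line. -/
theorem ne_sum_three (h : TotallyIrrational r s) {w₁ w₂ w₃ : ℝ} {n₁ n₂ n₃ : ℤ} (hn : n₁ ≠ n₃)
    (h_sum : w₁ + w₂ + w₃ = 1) (h_rel : n₁ * w₁ + n₂ * w₂ + n₃ * w₃ = 0) (v₁ v₂ v₃ : ℤ × ℤ) :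
    (r, s) ≠ w₁ • latVec v₁ + w₂ • latVec v₂ + w₃ • latVec v₃ := by
  intro heq
  refine h.smul_ne_add_smul (sub_ne_zero.2 hn) ((n₁ - n₃) • v₃ - n₃ • (v₁ - v₃))
    ((n₁ - n₃) • (v₂ - v₃) - (n₂ - n₃) • (v₁ - v₃)) w₂ ?_
  rw [heq]
  ext
  · simp only [latVec, Prod.smul_fst, Prod.fst_add, Prod.fst_sub, Prod.smul_mk, smul_eq_mul]
    push_cast
    linear_combination ((n₁ - n₃ : ℝ) * v₃.1 - n₃ * (v₁.1 - v₃.1)) * h_sum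
      + (v₁.1 - v₃.1 : ℝ) * h_rel
  · simp only [latVec, Prod.smul_snd, Prod.snd_add, Prod.snd_sub, Prod.smul_mk, smul_eq_mul]
    push_cast
    linear_combination ((n₁ - n₃ : ℝ) * v₃.2 - n₃ * (v₁.2 - v₃.2)) * h_sum
      + (v₁.2 - v₃.2 : ℝ) * h_rel

end TotallyIrrational

namespace PieceExchange

variable {m : ℕ}

section

variable {T : ℝ × ℝ → ℝ × ℝ} (E : PieceExchange T m)

def measure : Measure (ℝ × ℝ) := volume.restrict E.domain

theorem measurableSet_domain : MeasurableSet E.domain := MeasurableSet.iUnion E.measD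

instance : IsProbabilityMeasure E.measure :=
  ⟨by rw [measure, Measure.restrict_apply_univ]; exact E.measure_union⟩

theorem measure_absolutelyContinuous : E.measure ≪ volume :=
  Measure.absolutelyContinuous_restrict

theorem ae_mem_domain : ∀ᵐ x ∂E.measure, x ∈ E.domain := ae_restrict_mem E.measurableSet_domain

theorem measurePreserving_R : MeasurePreserving E.R E.measure E.measure := by
  refine ⟨E.measR, Measure.ext fun A hA => ?_⟩
  rw [Measure.map_apply E.measR hA, measure, Measure.restrict_apply hA,
    Measure.restrict_apply (E.measR hA), Set.inter_comm, Set.inter_comm A]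
  exact E.meas_pres A hA

theorem iterate_mem_domain {x : ℝ × ℝ} (hx : x ∈ E.domain) (k : ℕ) : E.R^[k] x ∈ E.domain :=
  Set.mem_iUnion.2 ⟨_, E.mem_code x hx k⟩

theorem measurable_C_apply (n : ℕ) : Measurable fun x => E.C x n :=
  (measurable_pi_apply n).comp E.measC

theorem ae_iterate_mem_D_unique :
    ∀ᵐ x ∂E.measure, ∀ k i j, E.R^[k] x ∈ E.D i → E.R^[k] x ∈ E.D j → i = j := by
  have h_unique : ∀ᵐ y ∂E.measure, ∀ i j, y ∈ E.D i → y ∈ E.D j → i = j := by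
    refine ae_all_iff.2 fun i => ae_all_iff.2 fun j => ?_
    by_cases hij : i = j
    · exact ae_of_all _ fun _ _ _ => hij
    · filter_upwards [measure_eq_zero_iff_ae_notMem.1
        (E.measure_absolutelyContinuous (E.aeDisjoint i j hij))] with y hy hi hj
      exact (hy ⟨hi, hj⟩).elim
  exact ae_all_iff.2 fun k => (E.measurePreserving_R.iterate k).quasiMeasurePreserving.ae h_unique

theorem ae_C_iterate : ∀ᵐ x ∂E.measure, ∀ k n, E.C (E.R^[k] x) n = E.C x (n + k) := by
  filter_upwards [E.ae_mem_domain, E.ae_iterate_mem_D_unique] with x hx h_unique k n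
  refine h_unique (n + k) _ _ ?_ (E.mem_code x hx (n + k))
  rw [Function.iterate_add_apply]
  exact E.mem_code _ (E.iterate_mem_domain hx k) n

def mass (i : Fin m) : ℝ := E.measure.real {x | E.C x 0 = i}

def pairMass (i j : Fin m) : ℝ := E.measure.real ({x | E.C x 0 = i} ∩ {x | E.C x 1 = j})

theorem pairMass_nonneg (i j : Fin m) : 0 ≤ E.pairMass i j := measureReal_nonneg

theorem measureReal_C_one (j : Fin m) : E.measure.real {x | E.C x 1 = j} = E.mass j := by
  have h : {x | E.C x 1 = j} =ᵐ[E.measure] E.R ⁻¹' {x | E.C x 0 = j} := by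
    filter_upwards [E.ae_C_iterate] with x hx
    change (E.C x 1 = j) = (E.C (E.R^[1] x) 0 = j)
    rw [hx 1 0]
  rw [measureReal_congr h, E.measurePreserving_R.measureReal_preimage (s := {x | E.C x 0 = j})
    (E.measurable_C_apply 0 (measurableSet_singleton j)).nullMeasurableSet, mass]

theorem sum_measureReal_inter (A : Set (ℝ × ℝ)) (n : ℕ) :
    ∑ j, E.measure.real (A ∩ {x | E.C x n = j}) = E.measure.real A := by
  have h := sum_measureReal_preimage_singleton (μ := E.measure.restrict A) univ
    (f := fun x => E.C x n) fun j _ => E.measurable_C_apply n (measurableSet_singleton j)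
  simp only [coe_univ, Set.preimage_univ, measureReal_restrict_apply_univ] at h
  rw [← h]
  refine sum_congr rfl fun j _ => ?_
  rw [measureReal_restrict_apply (E.measurable_C_apply n (measurableSet_singleton j)),
    Set.inter_comm]
  rfl

theorem sum_mass : ∑ i, E.mass i = 1 := by
  simpa [mass] using E.sum_measureReal_inter Set.univ 0

theorem sum_pairMass_right (i : Fin m) : ∑ j, E.pairMass i j = E.mass i :=
  E.sum_measureReal_inter _ 1

theorem sum_pairMass_left (j : Fin m) : ∑ i, E.pairMass i j = E.mass j := by
  simp only [pairMass, Set.inter_comm {x | E.C x 0 = _}]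
  rw [E.sum_measureReal_inter, measureReal_C_one]

theorem pairMass_le_mass_left (i j : Fin m) : E.pairMass i j ≤ E.mass i :=
  measureReal_mono Set.inter_subset_left

theorem pairMass_le_mass_right (i j : Fin m) : E.pairMass i j ≤ E.mass j :=
  (measureReal_mono Set.inter_subset_right).trans_eq (E.measureReal_C_one j)

theorem integral_comp_C_zero (F : Fin m → ℝ) :
    ∫ x, F (E.C x 0) ∂E.measure = ∑ i, E.mass i * F i := by
  rw [← integral_map (E.measurable_C_apply 0).aemeasurable
    (measurable_of_finite F).aestronglyMeasurable, integral_fintype .of_finite]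
  refine sum_congr rfl fun i _ => ?_
  rw [map_measureReal_apply (E.measurable_C_apply 0) (measurableSet_singleton i), smul_eq_mul]
  rfl

theorem mass_ne_zero_of_pairMass_ne_zero_left {i j : Fin m} (h : E.pairMass i j ≠ 0) :
    E.mass i ≠ 0 :=
  fun h0 => h (le_antisymm ((E.pairMass_le_mass_left i j).trans_eq h0) (E.pairMass_nonneg i j))

theorem mass_ne_zero_of_pairMass_ne_zero_right {i j : Fin m} (h : E.pairMass i j ≠ 0) :
    E.mass j ≠ 0 :=
  fun h0 => h (le_antisymm ((E.pairMass_le_mass_right i j).trans_eq h0) (E.pairMass_nonneg i j))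

theorem ae_pairMass_C_ne_zero :
    ∀ᵐ x ∂E.measure, ∀ k, E.pairMass (E.C x k) (E.C x (k + 1)) ≠ 0 := by
  have h_cyl (i j : Fin m) :
      ∀ᵐ x ∂E.measure, E.C x 0 = i → E.C x 1 = j → E.pairMass i j ≠ 0 := by
    by_cases h : E.pairMass i j = 0
    · have h_null := (measureReal_eq_zero_iff (measure_ne_top _ _)).1 h
      filter_upwards [measure_eq_zero_iff_ae_notMem.1 h_null] with x hx hi hj
      exact (hx ⟨hi, hj⟩).elim
    · exact ae_of_all _ fun _ _ _ => h
  have h_zero : ∀ᵐ x ∂E.measure, E.pairMass (E.C x 0) (E.C x 1) ≠ 0 := by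
    filter_upwards [ae_all_iff.2 fun i => ae_all_iff.2 (h_cyl i)] with x hx
    exact hx _ _ rfl rfl
  refine ae_all_iff.2 fun k => ?_
  filter_upwards [(E.measurePreserving_R.iterate k).quasiMeasurePreserving.ae h_zero,
    E.ae_C_iterate] with x hx h_shift
  rwa [h_shift, h_shift, zero_add, add_comm] at hx

theorem not_conjugate_of_forced {S : Set (Fin m)}
    (h_closed : ∀ i ∈ S, ∀ j, E.pairMass i j ≠ 0 → j ∈ S)
    (h_det : ∀ i ∈ S, ∀ j j', E.pairMass i j ≠ 0 → E.pairMass i j' ≠ 0 → j = j')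
    {b : Fin m} (hb : b ∈ S) (h_mass : E.mass b ≠ 0) : ¬ E.Conjugate := by
  intro h_conj
  set K := {x | x ∈ E.domain ∧ (∀ k, E.pairMass (E.C x k) (E.C x (k + 1)) ≠ 0) ∧ E.C x 0 = b}
  have h_code : ∀ x ∈ K, ∀ y ∈ K, E.C y = E.C x := by
    rintro x ⟨-, hx, hx0⟩ y ⟨-, hy, hy0⟩
    suffices ∀ k, E.C y k = E.C x k ∧ E.C x k ∈ S from funext fun k => (this k).1
    intro k
    induction k with
    | zero => exact ⟨hy0.trans hx0.symm, hx0 ▸ hb⟩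
    | succ k ih =>
      have hyk := hy k
      rw [ih.1] at hyk
      exact ⟨h_det _ ih.2 _ _ hyk (hx k), h_closed _ ih.2 _ (hx k)⟩
  have hK : E.measure K ≠ 0 := by
    refine fun h0 => h_mass ((measureReal_eq_zero_iff (measure_ne_top _ _)).2 ?_)
    rw [measure_eq_zero_iff_ae_notMem]
    filter_upwards [E.ae_mem_domain, E.ae_pairMass_C_ne_zero,
      measure_eq_zero_iff_ae_notMem.1 h0] with x hd hp hK hb
    exact hK ⟨hd, hp, hb⟩
  have hK_inf : K.Infinite := fun hfin =>
    hK (E.measure_absolutelyContinuous (hfin.measure_zero volume))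
  refine hK (E.measure_absolutelyContinuous (measure_mono_null (fun x hx => ?_) h_conj))
  obtain ⟨y, hy, hyx⟩ := (hK_inf.sdiff (Set.finite_singleton x)).nonempty
  exact ⟨hx.1, y, hy.1, hyx, h_code x hx y hy⟩

theorem pairMass_eq_zero_of_pairMass_self {b : Fin m} (h : E.pairMass b b = E.mass b) {j : Fin m}
    (hj : j ≠ b) : E.pairMass b j = 0 := by
  have h_rest : ∑ j ∈ univ.erase b, E.pairMass b j = 0 := by
    linarith [add_sum_erase univ (E.pairMass b) (mem_univ b), E.sum_pairMass_right b]
  exact (sum_eq_zero_iff_of_nonneg fun j _ => E.pairMass_nonneg b j).1 h_rest j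
    (mem_erase.2 ⟨hj, mem_univ j⟩)

theorem not_conjugate_of_pairMass_self {b : Fin m} (hb : E.mass b ≠ 0)
    (h : E.pairMass b b = E.mass b) : ¬ E.Conjugate := by
  have h_out (j : Fin m) (hj : E.pairMass b j ≠ 0) : j = b := by
    by_contra hne
    exact hj (E.pairMass_eq_zero_of_pairMass_self h hne)
  refine E.not_conjugate_of_forced (S := {b}) ?_ ?_ rfl hb
  · rintro i rfl j hj
    exact h_out j hj
  · rintro i rfl j j' hj hj'
    rw [h_out j hj, h_out j' hj']

def outNeighbors (i : Fin m) : Finset (Fin m) := univ.filter fun j => E.pairMass i j ≠ 0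

theorem mem_outNeighbors {i j : Fin m} : j ∈ E.outNeighbors i ↔ E.pairMass i j ≠ 0 := by
  simp [outNeighbors]

theorem not_conjugate_of_card_outNeighbors_le_one (h : ∀ i, #(E.outNeighbors i) ≤ 1) :
    ¬ E.Conjugate := by
  obtain ⟨b, -, hb⟩ := exists_ne_zero_of_sum_ne_zero (E.sum_mass.trans_ne one_ne_zero)
  refine E.not_conjugate_of_forced (S := Set.univ) (fun _ _ _ _ => trivial) ?_ trivial hb
  intro i _ j j' hj hj'
  exact card_le_one.1 (h i) j (E.mem_outNeighbors.2 hj) j' (E.mem_outNeighbors.2 hj')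

theorem outNeighbors_nonempty {i : Fin m} (h : E.mass i ≠ 0) : (E.outNeighbors i).Nonempty := by
  obtain ⟨j, -, hj⟩ := exists_ne_zero_of_sum_ne_zero ((E.sum_pairMass_right i).trans_ne h)
  exact ⟨j, E.mem_outNeighbors.2 hj⟩

theorem pair_mem_lang {i j : Fin m} (h : E.pairMass i j ≠ 0) : [i, j] ∈ E.lang := by
  have h_pos : E.measure ({x | E.C x 0 = i} ∩ {x | E.C x 1 = j}) ≠ 0 :=
    fun h0 => h ((measureReal_eq_zero_iff (measure_ne_top _ _)).2 h0)
  obtain ⟨x, ⟨hx0 : E.C x 0 = i, hx1 : E.C x 1 = j⟩, hx⟩ := nonempty_of_measure_ne_zero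
    (by rwa [measure, Measure.restrict_apply' E.measurableSet_domain] at h_pos)
  exact ⟨2, 0, x, hx, by simp [List.range_succ, hx0, hx1]⟩

theorem sum_card_outNeighbors_le_complexity : ∑ i, #(E.outNeighbors i) ≤ E.complexity 2 := by
  set W := {w : List (Fin m) | w ∈ E.lang ∧ w.length = 2}
  have hW : W.Finite := (List.finite_length_eq (Fin m) 2).subset fun w hw => hw.2
  have h_img : ↑((univ.sigma E.outNeighbors).image fun p => [p.1, p.2]) ⊆ W := by
    intro w hw
    obtain ⟨⟨i, j⟩, hij, rfl⟩ := mem_image.1 (mem_coe.1 hw)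
    exact ⟨E.pair_mem_lang (E.mem_outNeighbors.1 (mem_sigma.1 hij).2), rfl⟩
  have h_inj : Function.Injective fun p : (_ : Fin m) × Fin m => [p.1, p.2] := by
    rintro ⟨i, j⟩ ⟨i', j'⟩ h
    simp_all
  rw [← card_sigma, ← card_image_of_injective _ h_inj, ← Set.ncard_coe_finset, complexity,
    ← Nat.card_coe_set_eq]
  exact Set.ncard_le_ncard h_img hW

theorem exists_forall_ne_pairMass_eq_zero {i : Fin m} (h : #(E.outNeighbors i) ≤ 1) :
    ∃ β, ∀ j ≠ β, E.pairMass i j = 0 := by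
  have : Nonempty (Fin m) := ⟨i⟩
  obtain ⟨β, hβ⟩ := card_le_one_iff_subset_singleton.1 h
  refine ⟨β, fun j hj => ?_⟩
  by_contra h0
  exact hj (mem_singleton.1 (hβ (E.mem_outNeighbors.2 h0)))

theorem pairMass_eq_zero_or_of_card_le_two {i : Fin m} (h : #(E.outNeighbors i) ≤ 2)
    {a b c : Fin m} (hab : a ≠ b) (hac : a ≠ c) (hbc : b ≠ c) :
    E.pairMass i a = 0 ∨ E.pairMass i b = 0 ∨ E.pairMass i c = 0 := by
  by_contra! h_ne
  have h_sub : {a, b, c} ⊆ E.outNeighbors i := by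
    simp [insert_subset_iff, E.mem_outNeighbors, h_ne]
  have := card_le_card h_sub
  rw [card_eq_three.2 ⟨a, b, c, hab, hac, hbc, rfl⟩] at this
  omega

theorem card_outNeighbors_of_sum_le_four (h_deg : ∑ i, #(E.outNeighbors i) ≤ 4) {a b c : Fin m}
    (hab : a ≠ b) (hac : a ≠ c) (hbc : b ≠ c) (ha : 1 < #(E.outNeighbors a))
    (hb : E.mass b ≠ 0) (hc : E.mass c ≠ 0) :
    #(E.outNeighbors a) ≤ 2 ∧ #(E.outNeighbors b) ≤ 1 ∧ #(E.outNeighbors c) ≤ 1 ∧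
      ∀ i, i ≠ a → i ≠ b → i ≠ c → E.mass i = 0 := by
  have h_abc := sum_le_sum_of_subset (f := fun i => #(E.outNeighbors i)) (subset_univ {a, b, c})
  rw [sum_insert (by simp [hab, hac]), sum_pair hbc] at h_abc
  have hb' := card_pos.2 (E.outNeighbors_nonempty hb)
  have hc' := card_pos.2 (E.outNeighbors_nonempty hc)
  refine ⟨by omega, by omega, by omega, fun i hia hib hic => ?_⟩
  by_contra hi
  have h_abci := sum_le_sum_of_subset (f := fun i => #(E.outNeighbors i))
    (subset_univ {a, b, c, i})
  rw [sum_insert (by simp [hab, hac, hia.symm]), sum_insert (by simp [hbc, hib.symm]),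
    sum_pair hic.symm] at h_abci
  have hi' := card_pos.2 (E.outNeighbors_nonempty hi)
  omega

theorem mass_eq_pairMass_add_add_right {a b c : Fin m} (hab : a ≠ b) (hac : a ≠ c) (hbc : b ≠ c)
    (h_supp : ∀ i, i ≠ a → i ≠ b → i ≠ c → E.mass i = 0) (i : Fin m) :
    E.mass i = E.pairMass i a + E.pairMass i b + E.pairMass i c := by
  rw [← E.sum_pairMass_right, Fintype.sum_eq_add_add hab hac hbc fun j h₁ h₂ h₃ =>
    le_antisymm ((E.pairMass_le_mass_right i j).trans_eq (h_supp j h₁ h₂ h₃))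
      (E.pairMass_nonneg i j)]

theorem mass_eq_pairMass_add_add_left {a b c : Fin m} (hab : a ≠ b) (hac : a ≠ c) (hbc : b ≠ c)
    (h_supp : ∀ i, i ≠ a → i ≠ b → i ≠ c → E.mass i = 0) (j : Fin m) :
    E.mass j = E.pairMass a j + E.pairMass b j + E.pairMass c j := by
  rw [← E.sum_pairMass_left, Fintype.sum_eq_add_add hab hac hbc fun i h₁ h₂ h₃ =>
    le_antisymm ((E.pairMass_le_mass_left i j).trans_eq (h_supp i h₁ h₂ h₃))
      (E.pairMass_nonneg i j)]

theorem eq_or_eq_of_forall_ne_pairMass_eq_zero (h_conj : E.Conjugate) {a b c : Fin m}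
    (hab : a ≠ b) (hac : a ≠ c) (hbc : b ≠ c)
    (h_supp : ∀ i, i ≠ a → i ≠ b → i ≠ c → E.mass i = 0) (hb : E.mass b ≠ 0) {β : Fin m}
    (h_out : ∀ j ≠ β, E.pairMass b j = 0) : β = a ∨ β = c := by
  have h_row := E.mass_eq_pairMass_add_add_right hab hac hbc h_supp b
  by_contra! h
  rcases eq_or_ne β b with rfl | hβb
  · exact E.not_conjugate_of_pairMass_self hb
      (by linarith [h_out a h.1.symm, h_out c h.2.symm]) h_conj
  · exact hb (by linarith [h_out a h.1.symm, h_out b hβb.symm, h_out c h.2.symm])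

end

variable {r s : ℝ} (E : PieceExchange (fun x : ℝ × ℝ => (x.1 + r, x.2 + s)) m)

theorem R_sub_self {x : ℝ × ℝ} (hx : x ∈ E.domain) :
    E.R x - x = (r, s) - latVec (E.vec (E.C x 0)) := by
  have h := E.R_eq x hx 0
  simp only [Function.iterate_zero, id] at h
  rw [h]
  ext <;> simp <;> ring

/-- The mean displacement `R x - x` vanishes, since `R` preserves the measure. -/
theorem sum_mass_smul_vec : ∑ i, E.mass i • latVec (E.vec i) = (r, s) := by
  have key (L : ℝ × ℝ →L[ℝ] ℝ) : L (∑ i, E.mass i • latVec (E.vec i)) = L (r, s) := by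
    set F : Fin m → ℝ := fun i => L ((r, s) - latVec (E.vec i))
    have h_disp : (fun x => L (E.R x) - L x) =ᵐ[E.measure] fun x => F (E.C x 0) := by
      filter_upwards [E.ae_mem_domain] with x hx
      rw [← map_sub, E.R_sub_self hx]
    have h_bdd : ∀ᵐ x ∂E.measure, |L (E.R x) - L x| ≤ ∑ i, |F i| := by
      filter_upwards [h_disp] with x hx
      rw [hx]
      exact single_le_sum (f := fun i => |F i|) (fun i _ => abs_nonneg _) (mem_univ _)
    have h := E.measurePreserving_R.integral_comp_sub_eq_zero L.measurable h_bdd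
    rw [integral_congr_ae h_disp, integral_comp_C_zero] at h
    simp only [F, map_sub, mul_sub, sum_sub_distrib, ← sum_mul, E.sum_mass, one_mul] at h
    simp only [map_sum, map_smul, smul_eq_mul]
    linarith
  exact Prod.ext (key (.fst ℝ ℝ ℝ)) (key (.snd ℝ ℝ ℝ))

theorem false_of_mass_supported_pair (hirr : TotallyIrrational r s) {a b : Fin m} (hab : a ≠ b)
    (h_supp : ∀ i, i ≠ a → i ≠ b → E.mass i = 0) : False := by
  have h_zero : ∀ i, i ≠ a ∧ i ≠ b → E.mass i = 0 := fun i hi => h_supp i hi.1 hi.2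
  refine hirr.ne_sum_three (w₃ := 0) (n₁ := 0) (n₂ := 0) (n₃ := 1) (by norm_num)
    (by rw [add_zero, ← Fintype.sum_eq_add a b hab h_zero, E.sum_mass]) (by simp)
    (E.vec a) (E.vec b) 0 ?_
  rw [← E.sum_mass_smul_vec, Fintype.sum_eq_add a b hab fun i hi => by rw [h_zero i hi, zero_smul],
    zero_smul, add_zero]

theorem false_of_mass_supported_triple (hirr : TotallyIrrational r s) {a b c : Fin m}
    (hab : a ≠ b) (hac : a ≠ c) (hbc : b ≠ c) (h_supp : ∀ i, i ≠ a → i ≠ b → i ≠ c → E.mass i = 0)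
    {n₁ n₂ n₃ : ℤ} (hn : n₁ ≠ n₃) (h_rel : n₁ * E.mass a + n₂ * E.mass b + n₃ * E.mass c = 0) :
    False := by
  refine hirr.ne_sum_three hn ?_ h_rel (E.vec a) (E.vec b) (E.vec c) ?_
  · rw [← Fintype.sum_eq_add_add hab hac hbc h_supp, E.sum_mass]
  · rw [← E.sum_mass_smul_vec,
      Fintype.sum_eq_add_add hab hac hbc fun i h₁ h₂ h₃ => by rw [h_supp i h₁ h₂ h₃, zero_smul]]

/-- Each shape of the transition graph either has a letter returning to itself with all of its
mass or forces an integer relation among the three masses. -/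
theorem false_of_three_letters (hirr : TotallyIrrational r s) (h_conj : E.Conjugate)
    {a b c : Fin m} (hab : a ≠ b) (hac : a ≠ c) (hbc : b ≠ c)
    (h_supp : ∀ i, i ≠ a → i ≠ b → i ≠ c → E.mass i = 0)
    (ha : E.mass a ≠ 0) (hb : E.mass b ≠ 0) (hc : E.mass c ≠ 0)
    (h_out_a : E.pairMass a a = 0 ∨ E.pairMass a b = 0 ∨ E.pairMass a c = 0) {β γ : Fin m}
    (h_out_b : ∀ j ≠ β, E.pairMass b j = 0) (h_out_c : ∀ j ≠ γ, E.pairMass c j = 0) : False := by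
  have h_row := E.mass_eq_pairMass_add_add_right hab hac hbc h_supp
  have h_col := E.mass_eq_pairMass_add_add_left hab hac hbc h_supp
  have h_rel (n₁ n₂ n₃ : ℤ) (hn : n₁ ≠ n₃)
      (h : n₁ * E.mass a + n₂ * E.mass b + n₃ * E.mass c = 0) : False :=
    E.false_of_mass_supported_triple hirr hab hac hbc h_supp hn h
  have hb' : 0 < E.mass b := measureReal_nonneg.lt_of_ne' hb
  have hc' : 0 < E.mass c := measureReal_nonneg.lt_of_ne' hc
  have hβ := E.eq_or_eq_of_forall_ne_pairMass_eq_zero h_conj hab hac hbc h_supp hb h_out_b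
  have hγ := E.eq_or_eq_of_forall_ne_pairMass_eq_zero h_conj hac hab hbc.symm
    (fun i h₁ h₂ h₃ => h_supp i h₁ h₃ h₂) hc h_out_c
  rcases hβ with hβ | hβ <;> rcases hγ with hγ | hγ <;> subst β γ
  · -- `b → a ← c`
    have := h_out_b b hab.symm; have := h_out_b c hac.symm
    have := h_out_c b hab.symm; have := h_out_c c hac.symm
    rcases h_out_a with h | h | h
    · exact h_rel 1 (-1) (-1) (by norm_num) (by push_cast; linarith [h_row b, h_row c, h_col a])
    · linarith [h_col b]
    · linarith [h_col c]
  · -- `c → b → a`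
    have := h_out_b b hab.symm; have := h_out_b c hac.symm
    have := h_out_c a hab; have := h_out_c c hbc.symm
    rcases h_out_a with h | h | h
    · exact h_rel 1 (-1) 0 (by norm_num) (by push_cast; linarith [h_row b, h_col a])
    · exact h_rel 0 1 (-1) (by norm_num) (by push_cast; linarith [h_row c, h_col b])
    · linarith [h_col c]
  · -- `b → c → a`
    have := h_out_b a hac; have := h_out_b b hbc
    have := h_out_c b hab.symm; have := h_out_c c hac.symm
    rcases h_out_a with h | h | h
    · exact h_rel 1 0 (-1) (by norm_num) (by push_cast; linarith [h_row c, h_col a])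
    · linarith [h_col b]
    · exact h_rel 0 1 (-1) (by norm_num) (by push_cast; linarith [h_row b, h_col c])
  · -- `b ⇄ c`, so nothing flows from `a` to `b` or `c`
    have := h_out_b a hac; have := h_out_b b hbc
    have := h_out_c a hab; have := h_out_c c hbc.symm
    exact E.not_conjugate_of_pairMass_self ha
      (by linarith [h_row a, h_row b, h_row c, h_col b, h_col c]) h_conj

theorem five_le_complexity_two (hirr : TotallyIrrational r s) (h_conj : E.Conjugate) :
    5 ≤ E.complexity 2 := by
  by_contra! h_comp
  have h_deg : ∑ i, #(E.outNeighbors i) ≤ 4 := by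
    have := E.sum_card_outNeighbors_le_complexity
    omega
  by_cases h_det : ∀ i, #(E.outNeighbors i) ≤ 1
  · exact E.not_conjugate_of_card_outNeighbors_le_one h_det h_conj
  push Not at h_det
  obtain ⟨a, ha⟩ := h_det
  obtain ⟨x, hx, y, hy, hxy⟩ := one_lt_card.1 ha
  rw [E.mem_outNeighbors] at hx hy
  by_cases h_pair : ∀ i, i ≠ x → i ≠ y → E.mass i = 0
  · exact E.false_of_mass_supported_pair hirr hxy h_pair
  push Not at h_pair
  obtain ⟨z, hzx, hzy, hz⟩ := h_pair
  have hx' := E.mass_ne_zero_of_pairMass_ne_zero_right hx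
  have hy' := E.mass_ne_zero_of_pairMass_ne_zero_right hy
  obtain ⟨b, c, hab, hac, hbc, hb, hc⟩ :
      ∃ b c, a ≠ b ∧ a ≠ c ∧ b ≠ c ∧ E.mass b ≠ 0 ∧ E.mass c ≠ 0 := by
    by_cases hax : a = x
    · exact ⟨y, z, hax ▸ hxy, hax ▸ hzx.symm, hzy.symm, hy', hz⟩
    by_cases hay : a = y
    · exact ⟨x, z, hay ▸ hxy.symm, hay ▸ hzy.symm, hzx.symm, hx', hz⟩
    exact ⟨x, y, hax, hay, hxy, hx', hy'⟩
  obtain ⟨ha2, hb1, hc1, h_supp⟩ :=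
    E.card_outNeighbors_of_sum_le_four h_deg hab hac hbc ha hb hc
  obtain ⟨β, hβ⟩ := E.exists_forall_ne_pairMass_eq_zero hb1
  obtain ⟨γ, hγ⟩ := E.exists_forall_ne_pairMass_eq_zero hc1
  exact E.false_of_three_letters hirr h_conj hab hac hbc h_supp
    (E.mass_ne_zero_of_pairMass_ne_zero_left hx) hb hc
    (E.pairMass_eq_zero_or_of_card_le_two ha2 hab hac hbc) hβ hγ

end PieceExchange

/-- If `r, s` are reals with `n r + m s ∉ ℤ` for every pair of integers
`(n, m) ≠ (0, 0)` and `T (x,y) = (x+r, y+s)`, then there is no exchange of three pieces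
conjugate to `T` whose complexity at `2` is at most `4`; combined with `p^T(1) ≥ 3` and strict
monotonicity of the complexity this gives `p^T(2) ≥ 5`. -/
theorem no_three_piece_exchange_low_complexity (r s : ℝ)
    (hirr : ∀ p q : ℤ, (p, q) ≠ (0, 0) → ∀ k : ℤ, (p : ℝ) * r + (q : ℝ) * s ≠ (k : ℝ)) :
    (¬ ∃ E : PieceExchange (fun x : ℝ × ℝ => (x.1 + r, x.2 + s)) 3,
      E.Conjugate ∧ E.complexity 2 ≤ 4) ∧
    (5 : ℕ∞) ≤ complexityFn (fun x : ℝ × ℝ => (x.1 + r, x.2 + s)) 2 := by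
  refine ⟨fun ⟨E, h_conj, h_comp⟩ => ?_, le_iInf₂ fun m E => le_iInf fun h_conj => ?_⟩
  · have := E.five_le_complexity_two hirr h_conj
    omega
  · exact_mod_cast E.five_le_complexity_two hirr h_conj
end
end

section
/- Let σ be the Fibonacci substitution (σ(1) = 12, σ(2) = 1) and define the sequence of languages 𝔏₀ = {1,2}* (all finite words) and 𝔏_{N+1} = 𝓛(σ(𝔏_N)). Then the sequence (𝔏_N) is decreasing for inclusion and its intersection ⋂_N 𝔏_N equals L^φ, the factorial language of factors of the Fibonacci word. In particular, if a word w is, for every integer m, a factor of σ^m(v) for some word v ∈ {1,2}*, then w is a factor of the Fibonacci word. -/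
/-- The Fibonacci substitution `σ` on the alphabet `Fin 2` (`0` plays the role of the letter
`1` and `1` the role of the letter `2`): `σ(1) = 12`, `σ(2) = 1`. -/
def fibSub : Fin 2 → List (Fin 2) := fun a => if a = 0 then [0, 1] else [0]

/-- The Fibonacci substitution extended to words by concatenation. -/
def sigmaWord (w : List (Fin 2)) : List (Fin 2) := w.flatMap fibSub

/-- The factorial language `𝓛(L)` generated by a language `L`: all factors (contiguous
subwords) of words of `L`. -/
def FactorialClosure (L : Set (List (Fin 2))) : Set (List (Fin 2)) :=
  {u | ∃ v ∈ L, u <:+: v}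

/-- The prefix of length `n` of an infinite word `W`. -/
def prefixWord (W : ℕ → Fin 2) (n : ℕ) : List (Fin 2) := (List.range n).map W

/-- `W` is the Fibonacci word: the infinite fixed point of the Fibonacci substitution
beginning with the letter `1` (coded by `0 : Fin 2`). -/
def IsFibWord (W : ℕ → Fin 2) : Prop :=
  W 0 = 0 ∧
  ∀ n : ℕ, sigmaWord (prefixWord W n) = prefixWord W (sigmaWord (prefixWord W n)).length

/-- The factorial language of factors of an infinite word `W`. -/
def factorLang (W : ℕ → Fin 2) : Set (List (Fin 2)) :=
  {u | ∃ k : ℕ, u = (List.range u.length).map fun j => W (k + j)}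

/-- The iterated languages `𝔏₀ = 𝔏`, `𝔏_{N+1} = 𝓛(σ(𝔏_N))`. -/
def iterLang (L : Set (List (Fin 2))) : ℕ → Set (List (Fin 2))
  | 0 => L
  | N + 1 => FactorialClosure (sigmaWord '' iterLang L N)

/-!
A word lies in `𝔏_N` exactly when it is a factor of some `σ^N(v)`; as
`σ^(N+1)(v) = σ^N(σ(v))`, the sequence decreases. The word `σ^m(1)` is a prefix of the Fibonacci
word of length `> m`, so the factors of the Fibonacci word are the factors of the `σ^m(1)`, and
`σ^m(1)` is a factor of every `σ^N(σ^m(1))`. Conversely, `σ^(n+1)(v)` is a concatenation of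
blocks `σ^(n+1)(a)` of length `> n`, so a factor `w` of length `n` of it lies inside
`σ^(n+1)(ab)` for two letters `a, b`. Every `σ(ab)` is a factor of `σ^4(1) = 12112121`, hence
`w` is a factor of `σ^(n+4)(1)`.
-/

lemma sigmaWord_append (u v : List (Fin 2)) :
    sigmaWord (u ++ v) = sigmaWord u ++ sigmaWord v :=
  List.flatMap_append

lemma iterate_sigmaWord_append (m : ℕ) (u v : List (Fin 2)) :
    sigmaWord^[m] (u ++ v) = sigmaWord^[m] u ++ sigmaWord^[m] v := by
  induction m generalizing u v with
  | zero => rfl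
  | succ m ih => simp only [Function.iterate_succ_apply, sigmaWord_append, ih]

lemma iterate_sigmaWord_eq_flatMap (m : ℕ) (v : List (Fin 2)) :
    sigmaWord^[m] v = v.flatMap fun a => sigmaWord^[m] [a] := by
  induction v with
  | nil => induction m with
    | zero => rfl
    | succ m ih => rwa [Function.iterate_succ_apply]
  | cons a v ih => rw [← List.singleton_append, iterate_sigmaWord_append, ih]; rfl

lemma List.IsInfix.iterate_sigmaWord {u v : List (Fin 2)} (h : u <:+: v) (m : ℕ) :
    sigmaWord^[m] u <:+: sigmaWord^[m] v := by
  induction m with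
  | zero => exact h
  | succ m ih =>
    rw [Function.iterate_succ_apply', Function.iterate_succ_apply']
    exact ih.flatMap fibSub

lemma List.IsPrefix.iterate_sigmaWord {u v : List (Fin 2)} (h : u <+: v) (m : ℕ) :
    sigmaWord^[m] u <+: sigmaWord^[m] v := by
  induction m with
  | zero => exact h
  | succ m ih =>
    rw [Function.iterate_succ_apply', Function.iterate_succ_apply']
    exact ih.flatMap fibSub

lemma length_le_length_sigmaWord (u : List (Fin 2)) : u.length ≤ (sigmaWord u).length := by
  induction u with
  | nil => simp [sigmaWord]
  | cons a u ih =>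
    rw [← List.singleton_append, sigmaWord_append, List.length_append, List.length_append,
      List.length_singleton]
    have : 1 ≤ (sigmaWord [a]).length := by fin_cases a <;> decide
    omega

lemma length_le_length_iterate_sigmaWord (m : ℕ) (u : List (Fin 2)) :
    u.length ≤ (sigmaWord^[m] u).length := by
  induction m with
  | zero => exact le_rfl
  | succ m ih =>
    rw [Function.iterate_succ_apply']
    exact ih.trans (length_le_length_sigmaWord _)

lemma succ_le_length_iterate_sigmaWord_zero (m : ℕ) : m + 1 ≤ (sigmaWord^[m] [0]).length := by
  induction m with
  | zero => simp
  | succ m ih =>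
    have hsplit : sigmaWord^[m + 1] [0] = sigmaWord^[m] [0] ++ sigmaWord^[m] [1] :=
      iterate_sigmaWord_append m [0] [1]
    have := length_le_length_iterate_sigmaWord m [1]
    simp only [hsplit, List.length_append, List.length_singleton] at this ⊢
    omega

lemma iterate_sigmaWord_zero_prefix_iterate_succ (m : ℕ) (a : Fin 2) :
    sigmaWord^[m] [0] <+: sigmaWord^[m + 1] [a] :=
  have h : [0] <+: sigmaWord [a] := by fin_cases a <;> decide
  h.iterate_sigmaWord m

lemma iterate_sigmaWord_zero_prefix {m n : ℕ} (h : m ≤ n) :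
    sigmaWord^[m] [0] <+: sigmaWord^[n] [0] := by
  induction n, h using Nat.le_induction with
  | base => exact List.prefix_refl _
  | succ n _ ih => exact ih.trans (iterate_sigmaWord_zero_prefix_iterate_succ n 0)

lemma succ_le_length_iterate_sigmaWord_succ (m : ℕ) (a : Fin 2) :
    m + 1 ≤ (sigmaWord^[m + 1] [a]).length :=
  (succ_le_length_iterate_sigmaWord_zero m).trans
    (iterate_sigmaWord_zero_prefix_iterate_succ m a).length_le

lemma List.exists_infix_append_of_infix_flatMap {α β : Type*} {f : α → List β} {w : List β}
    (hf : ∀ a, w.length ≤ (f a).length) (hw : w ≠ []) :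
    ∀ {v : List α}, w <:+: v.flatMap f → ∃ a b, w <:+: f a ++ f b
  | [], h => absurd (List.infix_nil.mp h) hw
  | a :: v, h => by
    rw [List.flatMap_cons, List.infix_append_iff_ne_nil] at h
    rcases h with h | h | ⟨w₁, w₂, -, hw₂, rfl, hw₁, hpre⟩
    · exact ⟨a, a, h.trans List.infix_append_left⟩
    · exact List.exists_infix_append_of_infix_flatMap hf hw h
    · cases v with
      | nil => exact absurd (List.prefix_nil.mp hpre) hw₂
      | cons b v =>
        rw [List.flatMap_cons] at hpre
        have hb : w₂ <+: f b := List.prefix_of_prefix_length_le hpre (List.prefix_append _ _)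
          (le_trans (by simp) (hf b))
        obtain ⟨s, hs⟩ := hw₁
        obtain ⟨t, ht⟩ := hb
        exact ⟨a, b, s, t, by rw [← hs, ← ht]; simp⟩

lemma iterate_sigmaWord_pair_infix (m : ℕ) (a b : Fin 2) :
    sigmaWord^[m + 1] [a, b] <:+: sigmaWord^[m + 4] [0] := by
  have h : sigmaWord [a, b] <:+: sigmaWord^[4] [0] := by revert a b; decide
  rw [Function.iterate_succ_apply, Function.iterate_add_apply]
  exact h.iterate_sigmaWord m

theorem exists_infix_iterate_sigmaWord_zero {w v : List (Fin 2)}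
    (h : w <:+: sigmaWord^[w.length + 1] v) : ∃ m, w <:+: sigmaWord^[m] [0] := by
  rcases eq_or_ne w [] with rfl | hw
  · exact ⟨0, List.nil_infix⟩
  rw [iterate_sigmaWord_eq_flatMap] at h
  obtain ⟨a, b, hab⟩ := List.exists_infix_append_of_infix_flatMap
    (fun a => (Nat.le_succ _).trans (succ_le_length_iterate_sigmaWord_succ _ a)) hw h
  rw [← iterate_sigmaWord_append] at hab
  exact ⟨_, hab.trans (iterate_sigmaWord_pair_infix _ a b)⟩

lemma prefixWord_add (W : ℕ → Fin 2) (m n : ℕ) :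
    prefixWord W (m + n) = prefixWord W m ++ (List.range n).map fun j => W (m + j) := by
  simp [prefixWord, List.range_add, Function.comp_def]

lemma mem_factorLang_iff_exists_infix_prefixWord {W : ℕ → Fin 2} {u : List (Fin 2)} :
    u ∈ factorLang W ↔ ∃ n, u <:+: prefixWord W n := by
  constructor
  · rintro ⟨k, hk⟩
    exact ⟨k + u.length, prefixWord W k, [], by rw [prefixWord_add, ← hk, List.append_nil]⟩
  · rintro ⟨n, s, t, h⟩
    have hn : n = s.length + u.length + t.length := by
      simpa [prefixWord, Nat.add_assoc] using (congrArg List.length h).symm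
    rw [hn, prefixWord_add, prefixWord_add] at h
    have hsu := (List.append_inj h (by simp [prefixWord])).1
    exact ⟨s.length, (List.append_inj hsu (by simp [prefixWord])).2⟩

lemma IsFibWord.prefixWord_length_iterate_sigmaWord_zero {W : ℕ → Fin 2} (hW : IsFibWord W)
    (m : ℕ) : prefixWord W (sigmaWord^[m] [0]).length = sigmaWord^[m] [0] := by
  induction m with
  | zero => simp [prefixWord, hW.1]
  | succ m ih =>
    rw [Function.iterate_succ_apply', ← ih]
    exact (hW.2 _).symm

lemma IsFibWord.mem_factorLang_iff {W : ℕ → Fin 2} (hW : IsFibWord W) {u : List (Fin 2)} :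
    u ∈ factorLang W ↔ ∃ m, u <:+: sigmaWord^[m] [0] := by
  rw [mem_factorLang_iff_exists_infix_prefixWord]
  constructor
  · rintro ⟨n, hn⟩
    refine ⟨n, hn.trans (List.IsPrefix.isInfix ?_)⟩
    have hlen : n ≤ (sigmaWord^[n] [0]).length :=
      Nat.le_of_succ_le (succ_le_length_iterate_sigmaWord_zero n)
    rw [← hW.prefixWord_length_iterate_sigmaWord_zero n, ← Nat.add_sub_of_le hlen, prefixWord_add]
    exact List.prefix_append _ _
  · rintro ⟨m, hm⟩
    exact ⟨_, hW.prefixWord_length_iterate_sigmaWord_zero m ▸ hm⟩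

lemma mem_iterLang_univ_iff {N : ℕ} {w : List (Fin 2)} :
    w ∈ iterLang Set.univ N ↔ ∃ v, w <:+: sigmaWord^[N] v := by
  induction N generalizing w with
  | zero => exact ⟨fun _ => ⟨w, List.infix_refl w⟩, fun _ => Set.mem_univ w⟩
  | succ N ih =>
    simp only [iterLang, FactorialClosure, Set.mem_image, Set.mem_ofPred_eq, ih,
      Function.iterate_succ_apply']
    constructor
    · rintro ⟨_, ⟨_, ⟨v, hv⟩, rfl⟩, hw⟩
      exact ⟨v, hw.trans (hv.flatMap fibSub)⟩
    · rintro ⟨v, hv⟩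
      exact ⟨_, ⟨_, ⟨v, List.infix_refl _⟩, rfl⟩, hv⟩

/-- Starting from `𝔏₀ = {1,2}*` (all finite words) and iterating
`𝔏_{N+1} = 𝓛(σ(𝔏_N))`, the sequence of languages is decreasing for inclusion and its
intersection is the factor language of the Fibonacci word `W`.  In particular a word which is,
for every `m`, a factor of `σ^m(v)` for some word `v`, is a factor of the Fibonacci word. -/
theorem decreasing_iteration (W : ℕ → Fin 2) (hW : IsFibWord W) :
    (∀ N : ℕ, iterLang Set.univ (N + 1) ⊆ iterLang Set.univ N) ∧
    (⋂ N : ℕ, iterLang Set.univ N) = factorLang W ∧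
    (∀ w : List (Fin 2),
      (∀ m : ℕ, ∃ v : List (Fin 2), w <:+: sigmaWord^[m] v) → w ∈ factorLang W) := by
  have mem_of_forall : ∀ w : List (Fin 2),
      (∀ m : ℕ, ∃ v, w <:+: sigmaWord^[m] v) → w ∈ factorLang W := fun w h => by
    obtain ⟨v, hv⟩ := h (w.length + 1)
    exact hW.mem_factorLang_iff.2 (exists_infix_iterate_sigmaWord_zero hv)
  refine ⟨fun N w hw => ?_, ?_, mem_of_forall⟩
  · obtain ⟨v, hv⟩ := mem_iterLang_univ_iff.1 hw
    exact mem_iterLang_univ_iff.2 ⟨sigmaWord v, hv⟩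
  · ext w
    simp only [Set.mem_iInter, mem_iterLang_univ_iff]
    refine ⟨mem_of_forall w, fun hw N => ?_⟩
    obtain ⟨m, hm⟩ := hW.mem_factorLang_iff.1 hw
    refine ⟨sigmaWord^[m] [0], hm.trans (List.IsPrefix.isInfix ?_)⟩
    rw [← Function.iterate_add_apply]
    exact iterate_sigmaWord_zero_prefix (Nat.le_add_left m N)
end
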